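/- Let R be a commutative Noetherian ring, a an ideal of R, M an R-module, and let E be the injective hull of the R-module M/Γ_a(M). Then the a-torsion submodule Γ_a(E) is zero and Hom_R(R/a, E) = 0. -/

import Mathlib

universe u

/-! Once a finitely generated submodule of `M` is `a`-torsion, a single power of `a` kills it.
Applied to `a ^ n • y` for a lift `y` of an element killed by `a ^ n` in `M/Γ_a(M)`, this shows
that `M/Γ_a(M)` has no `a`-torsion when `R` is Noetherian; and since nonzero `a`-torsion in an
essential extension would meet the submodule it extends, `Γ_a(E) = 0`. A map `R/a → E` sends `1`
into `Γ_a(E)`, so it vanishes. -/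

/-- The `a`-torsion submodule `Γ_a(M)`: elements annihilated by some power of `a`. -/
def gammaTorsion (R : Type u) [CommRing R] (a : Ideal R) (M : Type u) [AddCommGroup M]
    [Module R M] : Submodule R M :=
  ⨆ n : ℕ, Submodule.torsionBySet R M ((a ^ n : Ideal R) : Set R)

section

variable {R : Type u} [CommRing R] {a : Ideal R} {M : Type u} [AddCommGroup M] [Module R M]

lemma monotone_torsionBySet_pow (a : Ideal R) :
    Monotone fun n : ℕ => Submodule.torsionBySet R M ((a ^ n : Ideal R) : Set R) :=
  fun m n hmn => Submodule.torsionBySet_le_torsionBySet_pow m n hmn a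

lemma mem_gammaTorsion_iff {x : M} :
    x ∈ gammaTorsion R a M ↔ ∃ n : ℕ, ∀ c ∈ a ^ n, c • x = 0 := by
  rw [gammaTorsion, Submodule.mem_iSup_of_directed _ (monotone_torsionBySet_pow a).directed_le]
  simp only [Submodule.mem_torsionBySet_iff, Subtype.forall, SetLike.mem_coe]

lemma exists_le_torsionBySet_pow_of_fg {N : Submodule R M} (hN : N.FG)
    (hle : N ≤ gammaTorsion R a M) :
    ∃ n : ℕ, N ≤ Submodule.torsionBySet R M ((a ^ n : Ideal R) : Set R) := by
  rw [Submodule.fg_iff_compact, CompleteLattice.isCompactElement_iff_le_of_directed_sSup_le] at hN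
  obtain ⟨_, ⟨n, rfl⟩, hn⟩ := hN _ (Set.range_nonempty _)
    (directedOn_range.mpr (monotone_torsionBySet_pow a).directed_le) (by rwa [sSup_range])
  exact ⟨n, hn⟩

lemma gammaTorsion_quotient_eq_bot [IsNoetherianRing R] :
    gammaTorsion R a (M ⧸ gammaTorsion R a M) = ⊥ := by
  refine eq_bot_iff.mpr fun x hx => ?_
  obtain ⟨n, hn⟩ := mem_gammaTorsion_iff.mp hx
  obtain ⟨y, rfl⟩ := Submodule.Quotient.mk_surjective _ x
  set P := Submodule.map (LinearMap.toSpanSingleton R M y) (a ^ n)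
  have hP : P ≤ gammaTorsion R a M := by
    refine Submodule.map_le_iff_le_comap.mpr fun c hc => ?_
    rw [Submodule.mem_comap, LinearMap.toSpanSingleton_apply, ← Submodule.Quotient.mk_eq_zero,
      Submodule.Quotient.mk_smul]
    exact hn c hc
  obtain ⟨m, hm⟩ := exists_le_torsionBySet_pow_of_fg ((IsNoetherian.noetherian _).map _) hP
  have hy : ∀ c ∈ a ^ m * a ^ n, c • y = 0 := by
    intro c hc
    refine (Ideal.mul_le (K := LinearMap.ker (LinearMap.toSpanSingleton R M y))).mpr
      (fun d hd e he => ?_) hc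
    rw [LinearMap.mem_ker, LinearMap.toSpanSingleton_apply, mul_smul]
    exact (Submodule.mem_torsionBySet_iff _ _).mp (hm ⟨e, he, rfl⟩) ⟨d, hd⟩
  rw [Submodule.mem_bot, Submodule.Quotient.mk_eq_zero]
  exact mem_gammaTorsion_iff.mpr ⟨m + n, by rwa [pow_add]⟩

lemma comap_gammaTorsion_le_of_injective {N : Type u} [AddCommGroup N] [Module R N]
    {f : N →ₗ[R] M} (hf : Function.Injective f) :
    (gammaTorsion R a M).comap f ≤ gammaTorsion R a N := by
  intro x hx
  obtain ⟨n, hn⟩ := mem_gammaTorsion_iff.mp hx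
  exact mem_gammaTorsion_iff.mpr ⟨n, fun c hc => hf (by rw [map_smul, map_zero, hn c hc])⟩

lemma gammaTorsion_eq_bot_of_essential {N : Type u} [AddCommGroup N] [Module R N]
    {f : N →ₗ[R] M} (hf : Function.Injective f)
    (hess : ∀ P : Submodule R M, P ≠ ⊥ → LinearMap.range f ⊓ P ≠ ⊥)
    (hN : gammaTorsion R a N = ⊥) :
    gammaTorsion R a M = ⊥ := by
  by_contra h
  obtain ⟨_, ⟨⟨x, rfl⟩, hx⟩, hx0⟩ := Submodule.exists_mem_ne_zero_of_ne_bot (hess _ h)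
  have : x = 0 := by
    simpa only [hN, Submodule.mem_bot] using comap_gammaTorsion_le_of_injective hf hx
  exact hx0 (by rw [this, map_zero])

lemma LinearMap.eq_zero_of_gammaTorsion_eq_bot (hM : gammaTorsion R a M = ⊥)
    (f : (R ⧸ a) →ₗ[R] M) : f = 0 := by
  have h1 : f 1 ∈ gammaTorsion R a M := by
    refine mem_gammaTorsion_iff.mpr ⟨1, fun c hc => ?_⟩
    rw [← map_smul, Algebra.smul_def, mul_one, Ideal.Quotient.algebraMap_eq,
      Ideal.Quotient.eq_zero_iff_mem.mpr (by rwa [pow_one] at hc), map_zero]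
  rw [hM, Submodule.mem_bot] at h1
  exact Submodule.linearMap_qext _ (LinearMap.ext_ring (by simpa using h1))

end

theorem gammaTorsion_injectiveHull_eq_bot_general (R : Type u) [CommRing R] [IsNoetherianRing R]
    (a : Ideal R) (M : Type u) [AddCommGroup M] [Module R M]
    (E : Type u) [AddCommGroup E] [Module R E]
    (ι : (M ⧸ gammaTorsion R a M) →ₗ[R] E) (hinj : Function.Injective ι)
    (hess : ∀ N : Submodule R E, N ≠ ⊥ → LinearMap.range ι ⊓ N ≠ ⊥) :
    gammaTorsion R a E = ⊥ ∧ ∀ f : (R ⧸ a) →ₗ[R] E, f = 0 := by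
  have hE : gammaTorsion R a E = ⊥ :=
    gammaTorsion_eq_bot_of_essential hinj hess gammaTorsion_quotient_eq_bot
  exact ⟨hE, LinearMap.eq_zero_of_gammaTorsion_eq_bot hE⟩

/-- If `E` is an injective hull of `M/Γ_a(M)` (i.e. `E` is injective and `M/Γ_a(M)` embeds in
`E` as an essential submodule), then `Γ_a(E) = 0` and `Hom_R(R/a, E) = 0`. -/
theorem gammaTorsion_injectiveHull_eq_bot (R : Type u) [CommRing R] [IsNoetherianRing R]
    (a : Ideal R) (M : Type u) [AddCommGroup M] [Module R M]
    (E : Type u) [AddCommGroup E] [Module R E] (hE : Module.Injective R E)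
    (ι : (M ⧸ gammaTorsion R a M) →ₗ[R] E) (hinj : Function.Injective ι)
    (hess : ∀ N : Submodule R E, N ≠ ⊥ → LinearMap.range ι ⊓ N ≠ ⊥) :
    gammaTorsion R a E = ⊥ ∧ ∀ f : (R ⧸ a) →ₗ[R] E, f = 0 :=
  gammaTorsion_injectiveHull_eq_bot_general R a M E ι hinj hess
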